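/- arXiv:2401.17439 — 4 statements merged into one kernel-verified Lean document; each statement's English description precedes it below -/
import Mathlib

section
/- The dimension of the multilinear part of Ar({a,b,c,d}) is 3, where Ar(X) is the span of words on X with an arrow between two letters, modulo commutativity of letters, antisymmetry of the arrow, and the relation (a→b)cv = (c→b)av + (a→c)bv. -/
noncomputable section

open Finsupp

/-- The relations defining the multilinear part of `Ar(X)` on `n` letters: a multilinear
arrow-word is determined by the ordered pair of letters carrying the arrow (the remaining
letters being the complement). The relations are: reversing the arrow changes the sign
(`(i→j) = -(j→i)`), and `(a→b)cv = (c→b)av + (a→c)bv`. -/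
def ArRel (n : ℕ) : Submodule ℚ ((Fin n × Fin n) →₀ ℚ) :=
  Submodule.span ℚ
    ({x | ∃ i j : Fin n, x = single (i, j) 1 + single (j, i) 1} ∪
     {x | ∃ a b c : Fin n, a ≠ b ∧ b ≠ c ∧ a ≠ c ∧
        x = single (a, b) 1 - single (c, b) 1 - single (a, c) 1})

/-- The multilinear part of `Ar({a_1,…,a_n})`. -/
abbrev ArMult (n : ℕ) := ((Fin n × Fin n) →₀ ℚ) ⧸ ArRel n

namespace ArAux

/-- `g i` is the image of letter `i` in `ℚ³`: letter `0` goes to `0`, letter `k+1` to `δ_k`. -/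
def g (i : Fin 4) : Fin 3 → ℚ := fun k => if i = k.succ then 1 else 0

lemma g_zero : g 0 = 0 := by
  funext m
  simp [g, (Fin.succ_ne_zero m).symm]

lemma g_succ (k : Fin 3) : g k.succ = Pi.single k 1 := by
  funext m
  simp [g, Fin.succ_inj, Pi.single_apply, eq_comm]

/-- The evaluation map sending the arrow `(i → j)` to `g i - g j`. -/
def φ : ((Fin 4 × Fin 4) →₀ ℚ) →ₗ[ℚ] (Fin 3 → ℚ) :=
  Finsupp.linearCombination ℚ (fun p : Fin 4 × Fin 4 => g p.1 - g p.2)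

lemma φ_single (i j : Fin 4) : φ (single (i, j) 1) = g i - g j := by
  simp [φ]

lemma mem1 (i j : Fin 4) : single (i, j) (1:ℚ) + single (j, i) 1 ∈ ArRel 4 :=
  Submodule.subset_span (Or.inl ⟨i, j, rfl⟩)

lemma mem2 (a b c : Fin 4) (hab : a ≠ b) (hbc : b ≠ c) (hac : a ≠ c) :
    single (a, b) (1:ℚ) - single (c, b) 1 - single (a, c) 1 ∈ ArRel 4 :=
  Submodule.subset_span (Or.inr ⟨a, b, c, hab, hbc, hac, rfl⟩)

lemma memii (i : Fin 4) : single (i, i) (1:ℚ) ∈ ArRel 4 := by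
  have h2 : single (i, i) (1:ℚ) =
      (1/2 : ℚ) • (single (i, i) (1:ℚ) + single (i, i) 1) := by
    rw [← two_smul ℚ, smul_smul]; norm_num
  rw [h2]
  exact Submodule.smul_mem _ _ (mem1 i i)

lemma key (i j : Fin 4) :
    single (i, j) (1:ℚ) - single (i, 0) 1 + single (j, 0) 1 ∈ ArRel 4 := by
  rcases eq_or_ne j 0 with rfl | hj
  · have h : single (i, (0:Fin 4)) (1:ℚ) - single (i, 0) 1 + single (0, 0) 1
        = single ((0:Fin 4), (0:Fin 4)) (1:ℚ) := by abel
    rw [h]; exact memii 0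
  rcases eq_or_ne i 0 with rfl | hi
  · have h : single ((0:Fin 4), j) (1:ℚ) - single (0, 0) 1 + single (j, 0) 1
        = (single ((0:Fin 4), j) (1:ℚ) + single (j, 0) 1) - single (0, 0) 1 := by abel
    rw [h]
    exact Submodule.sub_mem _ (mem1 0 j) (memii 0)
  rcases eq_or_ne i j with rfl | hij
  · have h : single (i, i) (1:ℚ) - single (i, 0) 1 + single (i, 0) 1
        = single (i, i) (1:ℚ) := by abel
    rw [h]; exact memii i
  · have h : single (i, j) (1:ℚ) - single (i, 0) 1 + single (j, 0) 1
        = (single (i, j) (1:ℚ) - single (0, j) 1 - single (i, 0) 1)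
          + (single ((0:Fin 4), j) (1:ℚ) + single (j, 0) 1) := by abel
    rw [h]
    exact Submodule.add_mem _ (mem2 i j 0 hij hj hi) (mem1 0 j)

lemma rel_le_ker : ArRel 4 ≤ LinearMap.ker φ := by
  rw [ArRel, Submodule.span_le]
  rintro x (⟨i, j, rfl⟩ | ⟨a, b, c, -, -, -, rfl⟩) <;>
    simp only [SetLike.mem_coe, LinearMap.mem_ker, map_add, map_sub, φ_single] <;> abel

/-- The induced map on the quotient. -/
def φbar : ArMult 4 →ₗ[ℚ] (Fin 3 → ℚ) := (ArRel 4).liftQ φ rel_le_ker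

/-- The inverse map, sending `δ_k` to the class of the arrow `(k+1 → 0)`. -/
def ψ : (Fin 3 → ℚ) →ₗ[ℚ] ArMult 4 :=
  (Pi.basisFun ℚ (Fin 3)).constr ℚ fun k =>
    Submodule.Quotient.mk (single (k.succ, 0) 1)

lemma ψ_g (i : Fin 4) : ψ (g i) = Submodule.Quotient.mk (single (i, 0) 1) := by
  rcases Fin.eq_zero_or_eq_succ i with rfl | ⟨k, rfl⟩
  · rw [g_zero, map_zero, eq_comm, Submodule.Quotient.mk_eq_zero]
    exact memii 0
  · have hb : g k.succ = Pi.basisFun ℚ (Fin 3) k := by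
      rw [g_succ]; simp [Pi.basisFun_apply]
    rw [hb, ψ, Module.Basis.constr_basis]

lemma comp1 : φbar.comp ψ = LinearMap.id := by
  apply (Pi.basisFun ℚ (Fin 3)).ext
  intro k
  have : ψ (Pi.basisFun ℚ (Fin 3) k) = Submodule.Quotient.mk (single (k.succ, 0) 1) :=
    Module.Basis.constr_basis _ _ _ _
  simp only [LinearMap.comp_apply, this, LinearMap.id_apply]
  show φbar (Submodule.Quotient.mk _) = _
  rw [φbar, Submodule.liftQ_apply, φ_single, g_zero, sub_zero, g_succ]
  simp [Pi.basisFun_apply]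

lemma comp2 : ψ.comp φbar = LinearMap.id := by
  apply Submodule.linearMap_qext
  ext ⟨i, j⟩
  simp only [LinearMap.comp_apply, Submodule.mkQ_apply, LinearMap.id_apply, lsingle_apply]
  show ψ (φbar (Submodule.Quotient.mk _)) = _
  rw [φbar, Submodule.liftQ_apply, φ_single, map_sub, ψ_g, ψ_g,
    ← Submodule.Quotient.mk_sub, Submodule.Quotient.eq]
  have h : (single (i, 0) (1:ℚ) - single (j, 0) 1) - single (i, j) 1
      = -(single (i, j) (1:ℚ) - single (i, 0) 1 + single (j, 0) 1) := by abel
  rw [h]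
  exact Submodule.neg_mem _ (key i j)

end ArAux

/-- The dimension of the multilinear part of `Ar({a,b,c,d})` is `3`. -/
theorem arMult_four_dim : Module.finrank ℚ (ArMult 4) = 3 := by
  have e : ArMult 4 ≃ₗ[ℚ] (Fin 3 → ℚ) :=
    LinearEquiv.ofLinear ArAux.φbar ArAux.ψ ArAux.comp1 ArAux.comp2
  rw [e.finrank_eq]
  simp [Module.finrank_fintype_fun_eq_card]
end
end

section
/- dim(Mult(LCA({a_1,...,a_n}))) = u_n + (n-1), where LCA(X) = LC(X) ⊕ Ar(X); in particular dim(Mult(LCA({a,b,c,d}))) = 27. -/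
/-!
In `Mult(Ar)` the antisymmetry and the three-letter relation with `c = 0` give
`(i → j) = (0 → j) - (0 → i)`, so the `n - 1` arrows `0 → k`, `k ≠ 0`, span. They are independent
because sending `i → j` to `e_j - e_i` (with `e_0 = 0`) kills every relation and maps them to a
basis of `ℚ^(n-1)`. Finally `u_4 = 24` is read off the exponential generating function.
-/

noncomputable section

open Finsupp

/-- The series `-log(1-t) = Σ_{n≥1} t^n/n`. -/
def negLogOneSub : PowerSeries ℚ := PowerSeries.mk fun n => if n = 0 then 0 else 1 / n

/-- The logarithmic numbers `u_n = dim Mult(LC({a_1,…,a_n}))`, with EGF `-log(1-t)·exp(t)`. -/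
def uQ (n : ℕ) : ℚ :=
  (n.factorial : ℚ) * PowerSeries.coeff (R := ℚ) n (negLogOneSub * PowerSeries.exp ℚ)

lemma uQ_four : uQ 4 = 24 := by
  simp [uQ, negLogOneSub, PowerSeries.coeff_mul, PowerSeries.coeff_exp,
    Finset.Nat.sum_antidiagonal_eq_sum_range_succ_mk, Finset.sum_range_succ]
  norm_num [Nat.factorial]

namespace ArMult

section Relations

variable {n : ℕ}

def arrow (i j : Fin n) : ArMult n := Submodule.Quotient.mk (single (i, j) 1)

lemma arrow_add_arrow_swap (i j : Fin n) : arrow i j + arrow j i = 0 := by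
  rw [arrow, arrow, ← Submodule.Quotient.mk_add, Submodule.Quotient.mk_eq_zero]
  exact Submodule.subset_span (Or.inl ⟨i, j, rfl⟩)

lemma arrow_self (i : Fin n) : arrow i i = 0 := by
  have h : (2 : ℚ) • arrow i i = 0 := by rw [two_smul]; exact arrow_add_arrow_swap i i
  simpa using h

lemma arrow_eq_add {a b c : Fin n} (hab : a ≠ b) (hbc : b ≠ c) (hac : a ≠ c) :
    arrow a b = arrow c b + arrow a c := by
  rw [← sub_eq_zero, ← sub_sub, arrow, arrow, arrow, ← Submodule.Quotient.mk_sub,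
    ← Submodule.Quotient.mk_sub, Submodule.Quotient.mk_eq_zero]
  exact Submodule.subset_span (Or.inr ⟨a, b, c, hab, hbc, hac, rfl⟩)

lemma arrow_eq_sub_of_base (z i j : Fin n) : arrow i j = arrow z j - arrow z i := by
  have hswap : arrow i z = -arrow z i := eq_neg_of_add_eq_zero_left (arrow_add_arrow_swap i z)
  by_cases hij : i = j
  · rw [hij, arrow_self, sub_self]
  by_cases hiz : i = z
  · rw [hiz, arrow_self, sub_zero]
  by_cases hjz : j = z
  · rw [hjz, arrow_self, zero_sub, hswap]
  rw [arrow_eq_add hij hjz hiz, hswap, sub_eq_add_neg]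

end Relations

variable (m : ℕ)

def letterVec : Fin (m + 1) → Fin m →₀ ℚ := Fin.cases 0 fun k => single k 1

def toFinsupp : ArMult (m + 1) →ₗ[ℚ] Fin m →₀ ℚ :=
  (ArRel (m + 1)).liftQ (linearCombination ℚ fun p => letterVec m p.2 - letterVec m p.1) <| by
    rw [ArRel, Submodule.span_le]
    rintro x (⟨i, j, rfl⟩ | ⟨a, b, c, -, -, -, rfl⟩) <;>
      simp only [SetLike.mem_coe, LinearMap.mem_ker, map_add, map_sub,
        linearCombination_single, one_smul] <;> abel

def ofFinsupp : (Fin m →₀ ℚ) →ₗ[ℚ] ArMult (m + 1) :=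
  linearCombination ℚ fun k => arrow 0 k.succ

variable {m}

lemma toFinsupp_arrow (i j : Fin (m + 1)) :
    toFinsupp m (arrow i j) = letterVec m j - letterVec m i := by
  simp [toFinsupp, arrow]

lemma ofFinsupp_letterVec (i : Fin (m + 1)) : ofFinsupp m (letterVec m i) = arrow 0 i := by
  cases i using Fin.cases with
  | zero => simp [letterVec, arrow_self]
  | succ k => simp [letterVec, ofFinsupp]

lemma toFinsupp_comp_ofFinsupp : toFinsupp m ∘ₗ ofFinsupp m = LinearMap.id := by
  ext k : 2
  simp [ofFinsupp, toFinsupp_arrow, letterVec]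

lemma ofFinsupp_comp_toFinsupp : ofFinsupp m ∘ₗ toFinsupp m = LinearMap.id := by
  refine Submodule.linearMap_qext _ (Finsupp.lhom_ext' fun p => LinearMap.ext_ring ?_)
  change ofFinsupp m (toFinsupp m (arrow p.1 p.2)) = arrow p.1 p.2
  rw [toFinsupp_arrow, map_sub, ofFinsupp_letterVec, ofFinsupp_letterVec,
    ← arrow_eq_sub_of_base]

def equivFinsupp (m : ℕ) : ArMult (m + 1) ≃ₗ[ℚ] Fin m →₀ ℚ :=
  .ofLinearMap (toFinsupp m) (ofFinsupp m) toFinsupp_comp_ofFinsupp ofFinsupp_comp_toFinsupp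

lemma finrank_eq {n : ℕ} (hn : 1 ≤ n) : Module.finrank ℚ (ArMult n) = n - 1 := by
  obtain ⟨m, rfl⟩ : ∃ m, n = m + 1 := ⟨n - 1, by omega⟩
  rw [(equivFinsupp m).finrank_eq, Module.finrank_finsupp_self, Fintype.card_fin,
    Nat.add_sub_cancel]

end ArMult

/-- `dim Mult(LCA({a_1,…,a_n})) = u_n + (n-1)` where `LCA(X) = LC(X) ⊕ Ar(X)` so that
the multilinear dimension is `u_n + dim Mult(Ar)`; in particular it is `27` for `n = 4`. -/
theorem multilinear_LCA_dim :
    (∀ n : ℕ, 1 ≤ n →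
      uQ n + (Module.finrank ℚ (ArMult n) : ℚ) = uQ n + ((n : ℚ) - 1)) ∧
    uQ 4 + (Module.finrank ℚ (ArMult 4) : ℚ) = 27 := by
  refine ⟨fun n hn => ?_, ?_⟩
  · rw [ArMult.finrank_eq hn, Nat.cast_sub hn, Nat.cast_one]
  · rw [ArMult.finrank_eq (by norm_num), uQ_four]
    norm_num
end
end

section
/- The EGF F(t,u) of forests of rooted hypertrees, where t counts vertices and u counts weight, satisfies (ln(1+uF)/u)·exp(-F) = t; equivalently F(t,u) = rev_t( ln(1+ut)/u · exp(-t) ). -/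
noncomputable section

/-- Composition `f(a)` of formal power series (the substitution of `a` into `f`,
valid when `a` has zero constant term). -/
def pcomp {R : Type*} [CommRing R] (f a : PowerSeries R) : PowerSeries R :=
  PowerSeries.mk fun n =>
    PowerSeries.coeff n (∑ k ∈ Finset.range (n + 1),
      PowerSeries.C (PowerSeries.coeff k f) * a ^ k)

/-- Coefficient ring `ℚ[[u]]`, `u` recording the weight grading. -/
abbrev Ru : Type := PowerSeries ℚ

/-- The weight variable `u`. -/
def uvar : Ru := PowerSeries.X

/-- `exp(t)` as a power series in `t` with coefficients in `ℚ[[u]]`. -/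
def Eu : PowerSeries Ru := PowerSeries.exp Ru

/-- `ln(1+ut)/u = Σ_{n≥1} (-1)^{n+1} u^{n-1} tⁿ/n`. -/
def Lgu : PowerSeries Ru :=
  PowerSeries.mk fun n => if n = 0 then 0 else ((-1 : ℚ) ^ (n + 1) / n) • uvar ^ (n - 1)

/-!
Everything is transported to Mathlib's `PowerSeries.subst`, which agrees with `pcomp` on series
without constant term. Since `log(1 + X) ∘ (exp X - 1) = X`, applying `log(1 + X)` to
`exp(u·H) = 1 + u·F` gives `ln(1 + u·F) = u·H`, i.e. `L(F) = H = t·exp(F)` for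
`L = ln(1 + u·t)/u`; multiplying by `exp(-F)` gives the first two identities. A left
compositional inverse of a series without constant term is also a right inverse (both are then
the series' compositional inverse), which gives the third.
-/

open PowerSeries

section Composition

variable {R : Type*} [CommRing R]

theorem coeff_pow_eq_zero_of_lt {a : R⟦X⟧} (ha : constantCoeff a = 0) {n k : ℕ} (h : n < k) :
    coeff n (a ^ k) = 0 :=
  X_pow_dvd_iff.mp (pow_dvd_pow_of_dvd (X_dvd_iff.mpr ha) k) n h

theorem pcomp_eq_subst (f : R⟦X⟧) {a : R⟦X⟧} (ha : constantCoeff a = 0) :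
    pcomp f a = subst a f := by
  ext n
  rw [coeff_subst' (HasSubst.of_constantCoeff_zero' ha),
    finsum_eq_sum_of_support_subset (s := Finset.range (n + 1))]
  · simp [pcomp, map_sum, coeff_C_mul]
  · intro k hk
    simp only [Function.mem_support] at hk
    simp only [Finset.coe_range, Set.mem_Iio]
    by_contra hnk
    exact hk (by rw [coeff_pow_eq_zero_of_lt ha (by omega), smul_zero])

theorem coeff_one_subst (f : R⟦X⟧) {a : R⟦X⟧} (ha : constantCoeff a = 0) :
    coeff 1 (subst a f) = coeff 1 f * coeff 1 a := by
  rw [← pcomp_eq_subst f ha]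
  simp [pcomp, map_sum, coeff_C_mul, Finset.sum_range_succ]

variable {a : R⟦X⟧}

theorem subst_one (ha : HasSubst a) : subst a (1 : R⟦X⟧) = 1 := by
  rw [← coe_substAlgHom ha, map_one]

theorem subst_neg (ha : HasSubst a) (f : R⟦X⟧) : subst a (-f) = -subst a f := by
  rw [← coe_substAlgHom ha, map_neg]

theorem subst_C_mul (ha : HasSubst a) (r : R) (f : R⟦X⟧) :
    subst a (C r * f) = C r * subst a f := by
  rw [subst_mul ha, subst_C]
  rfl

theorem subst_rescale (ha : HasSubst a) (r : R) (f : R⟦X⟧) :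
    subst a (rescale r f) = subst (C r * a) f := by
  rw [rescale_eq_subst, subst_comp_subst_apply (HasSubst.smul_X' r) ha, smul_eq_C_mul,
    subst_C_mul ha, subst_X ha]

theorem subst_eq_X_of_subst_eq_X {F G : R⟦X⟧} (hF : constantCoeff F = 0)
    (h : subst F G = X) : subst G F = X := by
  have hunit : IsUnit (coeff 1 F) := by
    refine IsUnit.of_mul_eq_one_right (coeff 1 G) ?_
    rw [← coeff_one_subst G hF, h, coeff_one_X]
  have hQ : HasSubst (F.substInvOfIsUnit hunit) := HasSubst.substInvOfIsUnit F hunit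
  have hFQ : subst (F.substInvOfIsUnit hunit) F = X := subst_substInvOfIsUnit_right F hF hunit
  have hGQ : G = F.substInvOfIsUnit hunit := by
    rw [← X_subst G, ← hFQ, ← subst_comp_subst_apply (HasSubst.of_constantCoeff_zero' hF) hQ, h,
      subst_X hQ]
  rw [hGQ, hFQ]

end Composition

section Exponential

variable {A : Type*} [CommRing A] [Algebra ℚ A]

theorem mk_neg_one_pow_mul_one_add_X :
    (mk fun n ↦ algebraMap ℚ A ((-1 : ℚ) ^ n)) * (1 + X) = 1 := by
  ext (_ | n)
  · simp
  · simp [mul_add, coeff_succ_mul_X, pow_succ, coeff_one]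

theorem log_subst_exp_sub_one : subst (exp A - 1) (log A) = X := by
  have := IsAddTorsionFree.of_module_rat A
  have hc : constantCoeff (exp A - 1) = 0 := by simp [constantCoeff_exp]
  have hs : HasSubst (exp A - 1) := HasSubst.of_constantCoeff_zero' hc
  have hexp : exp A = subst (exp A - 1) (1 + X : A⟦X⟧) := by
    rw [subst_add hs, subst_X hs, subst_one hs, add_sub_cancel]
  refine derivative.ext ?_ ?_
  · rw [derivative_subst hs, deriv_log, map_sub, derivative_exp, derivative_one, sub_zero,
      derivative_X]
    nth_rw 2 [hexp]
    rw [← subst_mul hs, mk_neg_one_pow_mul_one_add_X, subst_one hs]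
  · have h0 : constantCoeff (subst (exp A - 1) (log A)) = 0 :=
      constantCoeff_subst_eq_zero hc _ constantCoeff_log
    simp [h0]

theorem exp_mul_exp_subst_neg_X : exp A * subst (-X : A⟦X⟧) (exp A) = 1 := by
  rw [← neg_one_smul A X, ← rescale_eq_subst]
  exact exp_mul_exp_neg_eq_one

end Exponential

-- Scaling by `u` is written `C uvar * _`: the instance behind `uvar • _` on `Ru⟦X⟧` is
-- `algebraPowerSeries`, which treats `uvar` as a series in `t`.
theorem C_uvar_mul_Lgu : C uvar * Lgu = rescale uvar (log Ru) := by
  refine PowerSeries.ext fun n => ?_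
  rw [coeff_C_mul, coeff_rescale, Lgu, coeff_mk, coeff_log]
  rcases n with _ | n
  · simp
  · rw [if_neg n.succ_ne_zero, if_neg n.succ_ne_zero, Nat.add_sub_cancel, Algebra.smul_def,
      pow_succ]
    ring

theorem subst_Lgu_of_exp_subst_eq {F H : Ru⟦X⟧} (hF : constantCoeff F = 0)
    (hH : constantCoeff H = 0) (h : subst (C uvar * H) (exp Ru) = 1 + C uvar * F) :
    subst F Lgu = H := by
  have hsF := HasSubst.of_constantCoeff_zero' hF
  have hsuH : HasSubst (C uvar * H) := HasSubst.of_constantCoeff_zero' (by simp [hH])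
  have hexp : subst (C uvar * H) (exp Ru - 1) = C uvar * F := by
    rw [subst_sub hsuH, h, subst_one hsuH, add_sub_cancel_left]
  refine mul_left_cancel₀ ((map_ne_zero_iff C C_injective).mpr X_ne_zero : C uvar ≠ 0) ?_
  calc C uvar * subst F Lgu
      = subst (C uvar * F) (log Ru) := by
        rw [← subst_C_mul hsF, C_uvar_mul_Lgu, subst_rescale hsF]
    _ = subst (C uvar * H) (subst (exp Ru - 1) (log Ru)) := by
        rw [← hexp, subst_comp_subst_apply HasSubst.exp_sub_one hsuH]
    _ = C uvar * H := by
        rw [log_subst_exp_sub_one, subst_X hsuH]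

/-- The EGF `F(t,u)` of forests of rooted hypertrees (`t` counting vertices, `u` the weight),
determined by the species equations `FH = (1/u)E_{≥1}(u·H)` and `H = X·E(FH)`, i.e.
`exp(u·H) = 1 + u·F` and `H = t·exp(F)`, satisfies `(ln(1+uF)/u)·exp(-F) = t`;
equivalently `F = rev_t(ln(1+ut)/u · exp(-t))`. -/
theorem forests_rooted_hypertrees_egf
    (F H : PowerSeries Ru)
    (hF : PowerSeries.constantCoeff F = 0) (hH : PowerSeries.constantCoeff H = 0)
    (h1 : pcomp Eu (PowerSeries.C uvar * H) = 1 + PowerSeries.C uvar * F)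
    (h2 : H = PowerSeries.X * pcomp Eu F) :
    pcomp Lgu F * pcomp Eu (-F) = PowerSeries.X ∧
    pcomp (Lgu * pcomp Eu (-PowerSeries.X)) F = PowerSeries.X ∧
    pcomp F (Lgu * pcomp Eu (-PowerSeries.X)) = PowerSeries.X := by
  have hsF := HasSubst.of_constantCoeff_zero' hF
  have hX : constantCoeff (-X : Ru⟦X⟧) = 0 := by simp
  have hnegF : constantCoeff (-F) = 0 := by simp [hF]
  have huH : constantCoeff (C uvar * H) = 0 := by simp [hH]
  have hG : constantCoeff (Lgu * subst (-X : Ru⟦X⟧) (exp Ru)) = 0 := by simp [Lgu]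
  simp only [Eu, pcomp_eq_subst _ huH, pcomp_eq_subst _ hF] at h1 h2
  simp only [Eu, pcomp_eq_subst _ hX, pcomp_eq_subst _ hnegF, pcomp_eq_subst _ hG,
    pcomp_eq_subst _ hF]
  have hexpF : subst F (exp Ru) * subst F (subst (-X : Ru⟦X⟧) (exp Ru)) = 1 := by
    rw [← subst_mul hsF, exp_mul_exp_subst_neg_X, subst_one hsF]
  have hexpNeg : subst (-F) (exp Ru) = subst F (subst (-X : Ru⟦X⟧) (exp Ru)) := by
    rw [subst_comp_subst_apply (HasSubst.of_constantCoeff_zero' hX) hsF, subst_neg hsF,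
      subst_X hsF]
  have hGF : subst F (Lgu * subst (-X : Ru⟦X⟧) (exp Ru)) = X := by
    rw [subst_mul hsF, subst_Lgu_of_exp_subst_eq hF hH h1, h2, mul_assoc, hexpF, mul_one]
  exact ⟨by rwa [hexpNeg, ← subst_mul hsF], hGF, subst_eq_X_of_subst_eq_X hF hGF⟩
end
end

section
/- The operad FH of forests of rooted hypertrees is generated by its arity-2 component, i.e. by the elements x₂ (2-vertex rooted tree) and c₂ (two-vertex forest). -/
noncomputable section

/-- A forest of rooted hypertrees on a vertex/label set `V`: parent function and
sibling relation recording which co-children share a common hyperedge. -/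
structure FHs (V : Type) where
  parent : V → Option V
  sib : V → V → Bool

/-- `S` is a genuine forest of rooted hypertrees: the parent function is acyclic, and the
sibling (same hyperedge) relation is symmetric, irreflexive, only relates co-children of a
common parent, and its classes are genuine (transitivity). -/
def IsForestFH {V : Type} (S : FHs V) : Prop :=
  (∃ h : V → ℕ, ∀ v p, S.parent v = some p → h p < h v) ∧
  (∀ v w, S.sib v w → S.sib w v) ∧
  (∀ v, ¬ S.sib v v) ∧
  (∀ v w, S.sib v w → S.parent v = S.parent w ∧ S.parent v ≠ none) ∧
  (∀ u v w, S.sib u v → S.sib v w → u = w ∨ S.sib u w)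

/-- Relabeling along a bijection of label sets. -/
def mapFHs {V W : Type} (e : V ≃ W) (S : FHs V) : FHs W where
  parent w := (S.parent (e.symm w)).map e
  sib w w' := S.sib (e.symm w) (e.symm w')

/-- One grafting term of the insertion `S ∘ᵢ T`. -/
def graftFHs {α β : Type} [DecidableEq α] [DecidableEq β] (S : FHs α) (i : α) (T : FHs β)
    (f : {a : α // S.parent a = some i} → β) : FHs ({a : α // a ≠ i} ⊕ β) where
  parent v :=
    match v with
    | Sum.inl a =>
        match h : S.parent a.1 with
        | none => none
        | some p =>
            if hp : p = i then some (Sum.inr (f ⟨a.1, by rw [h, hp]⟩))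
            else some (Sum.inl ⟨p, hp⟩)
    | Sum.inr b =>
        match T.parent b with
        | some q => some (Sum.inr q)
        | none =>
            match S.parent i with
            | none => none
            | some p => if hp : p = i then none else some (Sum.inl ⟨p, hp⟩)
  sib v w :=
    match v, w with
    | Sum.inl a, Sum.inl a' => S.sib a.1 a'.1
    | Sum.inr b, Sum.inr b' =>
        T.sib b b' ||
          (decide (T.parent b = none) && decide (T.parent b' = none) &&
            decide (b ≠ b') && decide (S.parent i ≠ none))
    | _, _ => false

/-- The insertion `S ∘ᵢ T` in the operad of forests of rooted hypertrees. -/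
def insFHs {α β : Type} [Fintype α] [DecidableEq α] [Fintype β] [DecidableEq β]
    (S : FHs α) (i : α) (T : FHs β) : (FHs ({a : α // a ≠ i} ⊕ β)) →₀ ℚ :=
  ∑ f : {f : {a : α // S.parent a = some i} → β //
      ∀ a b : {a : α // S.parent a = some i}, S.sib a.1 b.1 → f a = f b},
    Finsupp.single (graftFHs S i T f.1) 1

/-- Bilinear extension of the insertion to formal sums. -/
def insFHsLin {α β : Type} [Fintype α] [DecidableEq α] [Fintype β] [DecidableEq β]
    (s : FHs α →₀ ℚ) (i : α) (t : FHs β →₀ ℚ) : (FHs ({a : α // a ≠ i} ⊕ β)) →₀ ℚ :=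
  s.sum fun S cs => t.sum fun T ct => (cs * ct) • insFHs S i T

/-- The generator `x₂`: the rooted tree `1—2` rooted at `1`. -/
def xFH : FHs (Fin 2) := ⟨fun v => if v = 0 then none else some 0, fun _ _ => false⟩

/-- The generator `c₂`: the forest of the two isolated vertices. -/
def cFH : FHs (Fin 2) := ⟨fun _ => none, fun _ _ => false⟩

/-- The suboperad of `FH` generated by the arity-2 component (by `x₂` and `c₂`):
the smallest collection of linear subspaces of the spaces of formal sums, over all label
sets, containing the identity, `x₂` and `c₂`, closed under relabeling and under all
insertions. -/
inductive GenFH : ∀ (V : Type) [Fintype V] [DecidableEq V], (FHs V →₀ ℚ) → Prop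
  | unit : GenFH (Fin 1) (Finsupp.single ⟨fun _ => none, fun _ _ => false⟩ 1)
  | x2 : GenFH (Fin 2) (Finsupp.single xFH 1)
  | c2 : GenFH (Fin 2) (Finsupp.single cFH 1)
  | relabel {V W : Type} [Fintype V] [DecidableEq V] [Fintype W] [DecidableEq W]
      (e : V ≃ W) {s : FHs V →₀ ℚ} :
      GenFH V s → GenFH W (Finsupp.mapDomain (mapFHs e) s)
  | comp {V W : Type} [Fintype V] [DecidableEq V] [Fintype W] [DecidableEq W]
      (i : V) {s : FHs V →₀ ℚ} {t : FHs W →₀ ℚ} :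
      GenFH V s → GenFH W t → GenFH _ (insFHsLin s i t)
  | add {V : Type} [Fintype V] [DecidableEq V] {s t : FHs V →₀ ℚ} :
      GenFH V s → GenFH V t → GenFH V (s + t)
  | smul {V : Type} [Fintype V] [DecidableEq V] (q : ℚ) {s : FHs V →₀ ℚ} :
      GenFH V s → GenFH V (q • s)

/-!
Induct on the number `n` of vertices and, for fixed `n`, downwards on the number `Φ < n²` of
pairs (vertex, strict ancestor). A one-vertex forest is the unit. If some hyperedge has two
children `a` and `b`, cutting `S` just below that hyperedge exhibits `S` as the insertion, at the
leaf `a`, of the branch below the hyperedge into the rest of `S`: a single grafting of two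
forests with fewer vertices. Otherwise pick a leaf `v`. If `v` is isolated, `S` is
`c₂ ∘₁ (S ∖ v)`. If `v` has parent `p`, `(S ∖ v) ∘ₚ x₂` is the sum over all ways of distributing
the children of `p` between the two vertices of `x₂`; keeping them all at the root gives `S`,
and every other term has more ancestor pairs, hence is generated by the induction hypothesis.
-/

section Forests

variable {V W : Type}

theorem FHs.ext {S T : FHs V} (hp : S.parent = T.parent) (hs : S.sib = T.sib) : S = T := by
  cases S; cases T; cases hp; cases hs; rfl

theorem IsForestFH.parent_ne_self {S : FHs V} (hS : IsForestFH S) (v : V) :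
    S.parent v ≠ some v := fun hv =>
  let ⟨⟨_, hh⟩, _⟩ := hS
  lt_irrefl _ (hh v v hv)

theorem IsForestFH.sib_symm_eq {S : FHs V} (hS : IsForestFH S) (u w : V) :
    S.sib u w = S.sib w u :=
  Bool.eq_iff_iff.mpr ⟨hS.2.1 u w, hS.2.1 w u⟩

theorem IsForestFH.sib_eq_false_of_parent_eq_none {S : FHs V} (hS : IsForestFH S) {v : V}
    (hv : S.parent v = none) (w : V) : S.sib v w = false :=
  Bool.eq_false_iff.mpr fun h => (hS.2.2.2.1 v w h).2 hv

theorem IsForestFH.exists_leaf [Fintype V] [Nonempty V] {S : FHs V} (hS : IsForestFH S) :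
    ∃ v, ∀ u, S.parent u ≠ some v := by
  obtain ⟨⟨h, hh⟩, -⟩ := hS
  obtain ⟨v, -, hv⟩ := Finset.exists_max_image Finset.univ h Finset.univ_nonempty
  exact ⟨v, fun u hu => (hv u (Finset.mem_univ u)).not_gt (hh u v hu)⟩

def IsIsoFH (F : W → V) (G : FHs W) (S : FHs V) : Prop :=
  F.Bijective ∧ (∀ x, (G.parent x).map F = S.parent (F x)) ∧
    ∀ x y, G.sib x y = S.sib (F x) (F y)

theorem IsIsoFH.mapFHs_eq {F : W → V} {G : FHs W} {S : FHs V} (h : IsIsoFH F G S) :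
    mapFHs (Equiv.ofBijective F h.1) G = S := by
  obtain ⟨hF, hp, hs⟩ := h
  set e := Equiv.ofBijective F hF
  refine FHs.ext (funext fun v => ?_) (funext fun v => funext fun w => ?_)
  · simpa [mapFHs, e, Equiv.ofBijective_apply_symm_apply] using hp (e.symm v)
  · simpa [mapFHs, e, Equiv.ofBijective_apply_symm_apply] using hs (e.symm v) (e.symm w)

end Forests

section Ancestors

variable {V W : Type}

/-- `AncFH S x y`: `y` is a strict ancestor of `x`. -/
def AncFH (S : FHs V) : V → V → Prop := Relation.TransGen fun x y => S.parent x = some y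

def PhiFH [Fintype V] (S : FHs V) : ℕ := ∑ x : V, {y | AncFH S x y}.ncard

theorem IsForestFH.not_ancFH_self {S : FHs V} (hS : IsForestFH S) (x : V) : ¬ AncFH S x x := by
  obtain ⟨⟨h, hh⟩, -⟩ := hS
  suffices ∀ {x y}, AncFH S x y → h y < h x from fun hx => lt_irrefl _ (this hx)
  intro x y hxy
  induction hxy with
  | single hs => exact hh _ _ hs
  | tail _ hs ih => exact (hh _ _ hs).trans ih

theorem IsForestFH.phiFH_lt [Fintype V] [Nonempty V] {S : FHs V} (hS : IsForestFH S) :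
    PhiFH S < Fintype.card V * Fintype.card V := by
  have hx : ∀ x : V, {y | AncFH S x y}.ncard < Fintype.card V := fun x => by
    rw [← Nat.card_eq_fintype_card, ← Set.ncard_univ]
    refine Set.ncard_lt_ncard (Set.ssubset_univ_iff.mpr fun h => ?_) (Set.toFinite _)
    exact hS.not_ancFH_self x (h.symm ▸ Set.mem_univ x :)
  calc PhiFH S < ∑ _x : V, Fintype.card V :=
        Finset.sum_lt_sum_of_nonempty Finset.univ_nonempty fun x _ => hx x
    _ = Fintype.card V * Fintype.card V := by simp

theorem ancFH_mapFHs {e : V ≃ W} {G : FHs V} {x y : V} :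
    AncFH (mapFHs e G) (e x) (e y) ↔ AncFH G x y := by
  refine ⟨fun h => ?_, fun h => Relation.TransGen.lift e (fun a b hab => by
    simp [Function.onFun, mapFHs, hab]) _ _ h⟩
  simpa [Function.onFun, AncFH] using Relation.TransGen.lift
    (p := fun x y => G.parent x = some y) e.symm (fun a b hab => by
      obtain ⟨c, hc, rfl⟩ := Option.map_eq_some_iff.mp hab
      simpa [Function.onFun] using hc) _ _ h

theorem phiFH_mapFHs [Fintype V] [Fintype W] (e : V ≃ W) (G : FHs V) :
    PhiFH (mapFHs e G) = PhiFH G := by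
  refine (e.sum_comp _).symm.trans (Finset.sum_congr rfl fun x _ => ?_)
  have : {y | AncFH (mapFHs e G) (e x) y} = e '' {y | AncFH G x y} := by
    ext y
    obtain ⟨y, rfl⟩ := e.surjective y
    simp [ancFH_mapFHs]
  rw [this, Set.ncard_image_of_injective _ e.injective]

theorem IsIsoFH.phiFH_eq [Fintype V] [Fintype W] {F : W → V} {G : FHs W} {S : FHs V}
    (h : IsIsoFH F G S) : PhiFH G = PhiFH S := by
  rw [← h.mapFHs_eq, phiFH_mapFHs]

theorem phiFH_lt_of_ancFH [Fintype V] {G G' : FHs V}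
    (hmono : ∀ x y, G.parent x = some y → AncFH G' x y) {x₀ y₀ : V}
    (hnew : AncFH G' x₀ y₀) (hold : ¬ AncFH G x₀ y₀) : PhiFH G < PhiFH G' := by
  have hsub : ∀ x, {y | AncFH G x y} ⊆ {y | AncFH G' x y} := fun x y hy => by
    induction hy with
    | single h => exact hmono _ _ h
    | tail _ h ih => exact ih.trans (hmono _ _ h)
  refine Finset.sum_lt_sum (fun x _ => Set.ncard_le_ncard (hsub x) (Set.toFinite _))
    ⟨x₀, Finset.mem_univ _, Set.ncard_lt_ncard ?_ (Set.toFinite _)⟩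
  exact (Set.ssubset_iff_of_subset (hsub x₀)).mpr ⟨y₀, hnew, hold⟩

end Ancestors

namespace GenFH

variable {V W : Type} [Fintype V] [DecidableEq V] [Fintype W] [DecidableEq W]

theorem sub {s t : FHs V →₀ ℚ} (hs : GenFH V s) (ht : GenFH V t) : GenFH V (s - t) := by
  simpa [sub_eq_add_neg] using hs.add (smul (-1) ht)

theorem finset_sum {ι : Type*} {s : FHs V →₀ ℚ} (hs : GenFH V s) (A : Finset ι)
    (F : ι → FHs V →₀ ℚ) (hF : ∀ i ∈ A, GenFH V (F i)) :
    GenFH V (∑ i ∈ A, F i) := by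
  classical
  induction A using Finset.induction_on with
  | empty => simpa using hs.sub hs
  | insert i A hi ih =>
    rw [Finset.sum_insert hi]
    exact (hF i (A.mem_insert_self i)).add (ih fun j hj => hF j (Finset.mem_insert_of_mem hj))

theorem single_of_sum {ι : Type*} [Fintype ι] [DecidableEq ι] (G : ι → FHs V) (i₀ : ι)
    (hsum : GenFH V (∑ i, Finsupp.single (G i) 1))
    (hrest : ∀ i ≠ i₀, GenFH V (Finsupp.single (G i) 1)) :
    GenFH V (Finsupp.single (G i₀) 1) := by
  rw [← Finset.add_sum_erase _ _ (Finset.mem_univ i₀)] at hsum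
  simpa using hsum.sub (hsum.finset_sum (Finset.univ.erase i₀) _ fun i hi =>
    hrest i (Finset.ne_of_mem_erase hi))

theorem of_isIsoFH {G : FHs W} {S : FHs V} (hG : GenFH W (Finsupp.single G 1)) {F : W → V}
    (hF : IsIsoFH F G S) : GenFH V (Finsupp.single S 1) := by
  simpa [hF.mapFHs_eq] using hG.relabel (Equiv.ofBijective F hF.1)

theorem insFHs {S : FHs V} {T : FHs W} (i : V) (hS : GenFH V (Finsupp.single S 1))
    (hT : GenFH W (Finsupp.single T 1)) : GenFH _ (insFHs S i T) := by
  simpa [insFHsLin] using hS.comp i hT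

end GenFH

theorem insFHs_of_leaf {α β : Type} [Fintype α] [DecidableEq α] [Fintype β] [DecidableEq β]
    {S : FHs α} {i : α} (T : FHs β) (hi : ∀ a, S.parent a ≠ some i)
    (f : {a : α // S.parent a = some i} → β) :
    insFHs S i T = Finsupp.single (graftFHs S i T f) 1 := by
  have : IsEmpty {a : α // S.parent a = some i} := ⟨fun a => hi a a.2⟩
  rw [insFHs, Fintype.sum_subsingleton _ ⟨f, fun a => isEmptyElim a⟩]

section Restriction

variable {V : Type} {S : FHs V} {P : V → Prop} [DecidablePred P]

/-- A vertex whose parent is removed becomes a root, and then loses its siblings. -/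
def resFHs (S : FHs V) (P : V → Prop) [DecidablePred P] : FHs {u // P u} where
  parent u := (S.parent u.1).bind fun q => if h : P q then some ⟨q, h⟩ else none
  sib u w := S.sib u.1 w.1 && (S.parent u.1).any fun q => decide (P q)

@[simp]
theorem resFHs_parent_eq_some_iff {u q : {u // P u}} :
    (resFHs S P).parent u = some q ↔ S.parent u.1 = some q.1 := by
  rcases h : S.parent u.1 with _ | p
  · simp [resFHs, h]
  · by_cases hp : P p
    · simp [resFHs, h, hp, Subtype.ext_iff, eq_comm]
    · simp only [resFHs, h, Option.bind_some, hp, dite_false, reduceCtorEq, false_iff,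
        Option.some.injEq]
      exact fun hq => hp (hq ▸ q.2)

theorem resFHs_parent_eq_none_iff {u : {u // P u}} :
    (resFHs S P).parent u = none ↔ ∀ q, S.parent u.1 = some q → ¬ P q := by
  rcases h : S.parent u.1 with _ | q
  · simp [resFHs, h]
  · by_cases hq : P q <;> simp [resFHs, h, hq]

theorem resFHs_sib_eq_true_iff {u w : {u // P u}} :
    (resFHs S P).sib u w = true ↔
      S.sib u.1 w.1 = true ∧ ∃ q, S.parent u.1 = some q ∧ P q := by
  rcases h : S.parent u.1 with _ | q <;> simp [resFHs, h]

theorem isForestFH_resFHs (hS : IsForestFH S) (P : V → Prop) [DecidablePred P] :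
    IsForestFH (resFHs S P) := by
  obtain ⟨⟨h, hh⟩, hsymm, hirr, hpar, htr⟩ := hS
  refine ⟨⟨fun u => h u.1, fun v p hvp => hh _ _ (resFHs_parent_eq_some_iff.mp hvp)⟩,
    ?_, ?_, ?_, ?_⟩
  · intro u w huw
    obtain ⟨hs, q, hq, hPq⟩ := resFHs_sib_eq_true_iff.mp huw
    exact resFHs_sib_eq_true_iff.mpr ⟨hsymm _ _ hs, q, (hpar _ _ hs).1 ▸ hq, hPq⟩
  · exact fun u hu => hirr _ (resFHs_sib_eq_true_iff.mp hu).1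
  · intro u w huw
    obtain ⟨hs, q, hq, hPq⟩ := resFHs_sib_eq_true_iff.mp huw
    have hu : (resFHs S P).parent u = some ⟨q, hPq⟩ := resFHs_parent_eq_some_iff.mpr hq
    have hw : (resFHs S P).parent w = some ⟨q, hPq⟩ :=
      resFHs_parent_eq_some_iff.mpr ((hpar _ _ hs).1 ▸ hq)
    simp [hu, hw]
  · intro u v w huv hvw
    obtain ⟨hs, q, hq, hPq⟩ := resFHs_sib_eq_true_iff.mp huv
    refine (htr _ _ _ hs (resFHs_sib_eq_true_iff.mp hvw).1).imp Subtype.ext fun h => ?_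
    exact resFHs_sib_eq_true_iff.mpr ⟨h, q, hq, hPq⟩

theorem resFHs_parent_map_val (hP : ∀ u q, P u → S.parent u = some q → P q) (u : {u // P u}) :
    ((resFHs S P).parent u).map Subtype.val = S.parent u.1 := by
  rcases h : S.parent u.1 with _ | q
  · simp [resFHs, h]
  · simp [resFHs, h, hP _ _ u.2 h]

theorem resFHs_parent_eq_none_of_upward (hP : ∀ u q, P u → S.parent u = some q → P q)
    {u : {u // P u}} (h : S.parent u.1 = none) :
    (resFHs S P).parent u = none := by
  simpa [h] using resFHs_parent_map_val hP u

theorem resFHs_sib_of_upward (hP : ∀ u q, P u → S.parent u = some q → P q)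
    (hS : IsForestFH S) (u w : {u // P u}) :
    (resFHs S P).sib u w = S.sib u.1 w.1 := by
  rcases h : S.parent u.1 with _ | q
  · simp [resFHs, h, hS.sib_eq_false_of_parent_eq_none h]
  · simp [resFHs, h, hP _ _ u.2 h]

end Restriction

section Graft

variable {α β : Type} [DecidableEq α] [DecidableEq β] {S : FHs α} {i : α} {T : FHs β}
  {f : {a : α // S.parent a = some i} → β}

theorem graftFHs_parent_inl_of_none {a : {a : α // a ≠ i}} (h : S.parent a.1 = none) :
    (graftFHs S i T f).parent (.inl a) = none := by
  simp only [graftFHs]; split <;> simp_all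

theorem graftFHs_parent_inl_of_eq {a : {a : α // a ≠ i}} (h : S.parent a.1 = some i) :
    (graftFHs S i T f).parent (.inl a) = some (.inr (f ⟨a.1, h⟩)) := by
  simp only [graftFHs]
  split
  · simp_all
  · rename_i p hp
    cases h.symm.trans hp
    simp

theorem graftFHs_parent_inl_of_ne {a : {a : α // a ≠ i}} {p : α} (h : S.parent a.1 = some p)
    (hp : p ≠ i) : (graftFHs S i T f).parent (.inl a) = some (.inl ⟨p, hp⟩) := by
  simp only [graftFHs]; split <;> simp_all

theorem graftFHs_parent_inr_of_some {b q : β} (h : T.parent b = some q) :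
    (graftFHs S i T f).parent (.inr b) = some (.inr q) := by
  simp only [graftFHs]; split <;> simp_all

theorem graftFHs_parent_inr_of_none_none {b : β} (hb : T.parent b = none)
    (hi : S.parent i = none) : (graftFHs S i T f).parent (.inr b) = none := by
  simp only [graftFHs]; split <;> simp_all

theorem graftFHs_parent_inr_of_none_some {b : β} {p : α} (hb : T.parent b = none)
    (hi : S.parent i = some p) (hp : p ≠ i) :
    (graftFHs S i T f).parent (.inr b) = some (.inl ⟨p, hp⟩) := by
  simp only [graftFHs]; split <;> simp_all

@[simp]
theorem graftFHs_sib_inl_inl {a a' : {a : α // a ≠ i}} :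
    (graftFHs S i T f).sib (.inl a) (.inl a') = S.sib a.1 a'.1 := rfl

@[simp]
theorem graftFHs_sib_inr_inr {b b' : β} :
    (graftFHs S i T f).sib (.inr b) (.inr b') =
      (T.sib b b' || (decide (T.parent b = none) && decide (T.parent b' = none) &&
        decide (b ≠ b') && decide (S.parent i ≠ none))) := rfl

@[simp]
theorem graftFHs_sib_inl_inr {a : {a : α // a ≠ i}} {b : β} :
    (graftFHs S i T f).sib (.inl a) (.inr b) = false := rfl

@[simp]
theorem graftFHs_sib_inr_inl {a : {a : α // a ≠ i}} {b : β} :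
    (graftFHs S i T f).sib (.inr b) (.inl a) = false := rfl

theorem exists_height_graftFHs [Fintype β] (hS : IsForestFH S) (hT : IsForestFH T) :
    ∃ h : {a : α // a ≠ i} ⊕ β → ℕ,
      ∀ x y, (graftFHs S i T f).parent x = some y → h y < h x := by
  obtain ⟨⟨hs, hhs⟩, -⟩ := hS
  obtain ⟨⟨ht, hht⟩, -⟩ := hT
  -- the vertices of `T` sit strictly between the levels of `i` and of its children
  set M := ∑ b, ht b + 1
  have hM : ∀ b, ht b < M := fun b =>
    Nat.lt_succ_of_le (Finset.single_le_sum (fun _ _ => Nat.zero_le _) (Finset.mem_univ b))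
  refine ⟨Sum.elim (fun a => M * hs a.1) (fun b => M * hs i + ht b), ?_⟩
  rintro (a | b) y hy
  · rcases hpa : S.parent a.1 with _ | q
    · simp [graftFHs_parent_inl_of_none hpa] at hy
    · have hlt := hhs _ _ hpa
      by_cases hq : q = i
      · subst hq
        rw [graftFHs_parent_inl_of_eq hpa, Option.some_inj] at hy
        subst hy
        have := hM (f ⟨a.1, hpa⟩)
        simp only [Sum.elim_inl, Sum.elim_inr]
        nlinarith
      · rw [graftFHs_parent_inl_of_ne hpa hq, Option.some_inj] at hy
        subst hy
        exact Nat.mul_lt_mul_of_pos_left hlt (show 0 < M by omega)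
  · rcases hb : T.parent b with _ | q
    · rcases hi : S.parent i with _ | p
      · simp [graftFHs_parent_inr_of_none_none hb hi] at hy
      · have hpi : p ≠ i := fun h => lt_irrefl _ (hhs i i (h ▸ hi))
        rw [graftFHs_parent_inr_of_none_some hb hi hpi, Option.some_inj] at hy
        subst hy
        have := Nat.mul_lt_mul_of_pos_left (hhs _ _ hi) (show 0 < M by omega)
        simp only [Sum.elim_inl, Sum.elim_inr]
        omega
    · rw [graftFHs_parent_inr_of_some hb, Option.some_inj] at hy
      subst hy
      simpa using hht _ _ hb

theorem graftFHs_parent_eq_of_sib (hS : IsForestFH S) (hT : IsForestFH T)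
    (hf : ∀ a b, S.sib a.1 b.1 → f a = f b) :
    ∀ x y, (graftFHs S i T f).sib x y →
      (graftFHs S i T f).parent x = (graftFHs S i T f).parent y ∧
        (graftFHs S i T f).parent x ≠ none := by
  obtain ⟨-, -, -, hpar, -⟩ := id hS
  obtain ⟨-, -, -, tpar, -⟩ := id hT
  rintro (a | b) (a' | b') h <;> simp only [graftFHs_sib_inl_inl, graftFHs_sib_inr_inr,
    graftFHs_sib_inl_inr, graftFHs_sib_inr_inl, Bool.or_eq_true, Bool.and_eq_true,
    decide_eq_true_eq, Bool.false_eq_true] at h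
  · obtain ⟨hpp, hne⟩ := hpar _ _ h
    obtain ⟨q, hq⟩ := Option.ne_none_iff_exists'.mp hne
    have hq' : S.parent a'.1 = some q := hpp ▸ hq
    by_cases hqi : q = i
    · subst hqi
      rw [graftFHs_parent_inl_of_eq hq, graftFHs_parent_inl_of_eq hq',
        hf ⟨_, hq⟩ ⟨_, hq'⟩ h]
      simp
    · rw [graftFHs_parent_inl_of_ne hq hqi, graftFHs_parent_inl_of_ne hq' hqi]
      simp
  · rcases h with h | ⟨⟨⟨hb, hb'⟩, -⟩, hi⟩
    · obtain ⟨hpp, hne⟩ := tpar _ _ h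
      obtain ⟨q, hq⟩ := Option.ne_none_iff_exists'.mp hne
      rw [graftFHs_parent_inr_of_some hq, graftFHs_parent_inr_of_some (hpp ▸ hq)]
      simp
    · obtain ⟨p, hp⟩ := Option.ne_none_iff_exists'.mp hi
      rw [graftFHs_parent_inr_of_none_some hb hp (fun h => hS.parent_ne_self i (h ▸ hp)),
        graftFHs_parent_inr_of_none_some hb' hp (fun h => hS.parent_ne_self i (h ▸ hp))]
      simp

theorem isForestFH_graftFHs [Fintype β] (hS : IsForestFH S) (hT : IsForestFH T)
    (hf : ∀ a b, S.sib a.1 b.1 → f a = f b) : IsForestFH (graftFHs S i T f) := by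
  obtain ⟨-, hsymm, hirr, -, htr⟩ := id hS
  obtain ⟨-, tsymm, tirr, tpar, ttr⟩ := id hT
  refine ⟨exists_height_graftFHs hS hT, ?_, ?_, ?_, ?_⟩
  · rintro (a | b) (a' | b') h <;> simp only [graftFHs_sib_inl_inl, graftFHs_sib_inr_inr,
      graftFHs_sib_inl_inr, graftFHs_sib_inr_inl, Bool.or_eq_true, Bool.and_eq_true,
      decide_eq_true_eq, Bool.false_eq_true] at h ⊢
    · exact hsymm _ _ h
    · exact h.imp (tsymm _ _) fun ⟨⟨⟨h1, h2⟩, h3⟩, h4⟩ =>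
        ⟨⟨⟨h2, h1⟩, Ne.symm h3⟩, h4⟩
  · rintro (a | b) h <;> simp only [graftFHs_sib_inl_inl, graftFHs_sib_inr_inr,
      Bool.or_eq_true, Bool.and_eq_true, decide_eq_true_eq] at h
    · exact hirr _ h
    · exact h.elim (tirr _) fun h => h.1.2 rfl
  · exact graftFHs_parent_eq_of_sib hS hT hf
  · rintro (a | b) (a' | b') (a'' | b'') h h' <;> simp only [graftFHs_sib_inl_inl,
      graftFHs_sib_inr_inr, graftFHs_sib_inl_inr, graftFHs_sib_inr_inl, Bool.or_eq_true,
      Bool.and_eq_true, decide_eq_true_eq, Bool.false_eq_true, Sum.inl.injEq, Sum.inr.injEq,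
      Subtype.ext_iff] at h h' ⊢
    · exact htr _ _ _ h h'
    · rcases h with h | ⟨⟨⟨hb, hb'⟩, -⟩, hi⟩ <;>
        rcases h' with h' | ⟨⟨⟨hb'', hb'''⟩, -⟩, -⟩
      · exact (ttr _ _ _ h h').imp_right Or.inl
      · exact absurd ((tpar _ _ h).1.trans hb'') (tpar _ _ h).2
      · exact absurd hb' (tpar _ _ h').2
      · by_cases hbb : b = b''
        · exact Or.inl hbb
        · exact Or.inr (Or.inr ⟨⟨⟨hb, hb'''⟩, hbb⟩, hi⟩)

end Graft

section Generators

variable {α : Type} [DecidableEq α] {S : FHs α} {i : α}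

@[simp] theorem xFH_parent_zero : xFH.parent 0 = none := rfl

@[simp] theorem xFH_parent_one : xFH.parent 1 = some 0 := rfl

theorem isForestFH_xFH : IsForestFH xFH :=
  ⟨⟨fun v => v.val, by decide⟩, by decide, by decide, by decide, by decide⟩

theorem graftFHs_xFH_zero_parent_ne_inr_one (x : {a : α // a ≠ i} ⊕ Fin 2) :
    (graftFHs S i xFH fun _ => 0).parent x ≠ some (.inr 1) := by
  rcases x with a | b
  · rcases h : S.parent a.1 with _ | q
    · simp [graftFHs_parent_inl_of_none h]
    · by_cases hq : q = i
      · subst hq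
        simp [graftFHs_parent_inl_of_eq h]
      · simp [graftFHs_parent_inl_of_ne h hq]
  · fin_cases b
    · rcases h : S.parent i with _ | p
      · simp [graftFHs_parent_inr_of_none_none xFH_parent_zero h]
      · by_cases hp : p = i
        · simp [graftFHs, h, hp]
        · simp [graftFHs_parent_inr_of_none_some xFH_parent_zero h hp]
    · simp [graftFHs_parent_inr_of_some xFH_parent_one]

theorem phiFH_graftFHs_xFH_lt [Fintype α] (hS : IsForestFH S)
    (g : {a : α // S.parent a = some i} → Fin 2)
    {a₀ : {a : α // S.parent a = some i}} (ha₀ : g a₀ = 1) :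
    PhiFH (graftFHs S i xFH fun _ => 0) < PhiFH (graftFHs S i xFH g) := by
  have ha₀i : a₀.1 ≠ i := fun h => hS.parent_ne_self i (by simpa [h] using a₀.2)
  refine phiFH_lt_of_ancFH (fun x y hxy => ?_) (x₀ := .inl ⟨a₀.1, ha₀i⟩) (y₀ := .inr 1)
    (.single (by rw [graftFHs_parent_inl_of_eq (a := ⟨a₀.1, ha₀i⟩) a₀.2, ha₀]))
    fun h => ?_
  · rcases x with a | b
    · rcases h : S.parent a.1 with _ | q
      · simp [graftFHs_parent_inl_of_none h] at hxy
      · by_cases hq : q = i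
        · subst hq
          rw [graftFHs_parent_inl_of_eq h, Option.some_inj] at hxy
          subst hxy
          have hg : (graftFHs S q xFH g).parent (.inl a) = some (.inr (g ⟨a.1, h⟩)) :=
            graftFHs_parent_inl_of_eq h
          rcases Fin.exists_fin_two.mp ⟨g ⟨a.1, h⟩, rfl⟩ with h0 | h1
          · exact .single (h0 ▸ hg)
          · exact .head (h1 ▸ hg) (.single (graftFHs_parent_inr_of_some xFH_parent_one))
        · exact .single ((graftFHs_parent_inl_of_ne h hq).trans
            ((graftFHs_parent_inl_of_ne h hq).symm.trans hxy))
    · exact .single hxy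
  · cases h with
    | single h => exact graftFHs_xFH_zero_parent_ne_inr_one _ h
    | tail _ h => exact graftFHs_xFH_zero_parent_ne_inr_one _ h

end Generators

section Isomorphisms

variable {V : Type} [DecidableEq V] {S : FHs V}

theorem isIsoFH_graftFHs_cFH (hS : IsForestFH S) {v : V} (hroot : S.parent v = none)
    (hleaf : ∀ u, S.parent u ≠ some v)
    (f : {a : Fin 2 // cFH.parent a = some 1} → {u // u ≠ v}) :
    IsIsoFH (Sum.elim (fun _ => v) Subtype.val : {a : Fin 2 // a ≠ 1} ⊕ {u // u ≠ v} → V)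
      (graftFHs cFH 1 (resFHs S (· ≠ v)) f) S := by
  have hP : ∀ u q, u ≠ v → S.parent u = some q → q ≠ v := fun u q _ hq h =>
    hleaf u (h ▸ hq)
  refine ⟨⟨Function.Injective.sumElim (fun a b _ => ?_) Subtype.val_injective
    fun _ u => u.2.symm, fun u => ?_⟩, ?_, ?_⟩
  · have := a.2
    have := b.2
    exact Subtype.ext (by omega)
  · by_cases hu : u = v
    · exact ⟨.inl ⟨0, by decide⟩, hu.symm⟩
    · exact ⟨.inr ⟨u, hu⟩, rfl⟩
  · rintro (a | u)
    · rw [graftFHs_parent_inl_of_none rfl]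
      exact hroot.symm
    · rw [Sum.elim_inr, ← resFHs_parent_map_val hP u]
      rcases hq : (resFHs S (· ≠ v)).parent u with _ | q
      · rw [graftFHs_parent_inr_of_none_none hq rfl]
        rfl
      · rw [graftFHs_parent_inr_of_some hq]
        rfl
  · have hv : ∀ u, S.sib v u = false := hS.sib_eq_false_of_parent_eq_none hroot
    rintro (a | u) (a' | u')
    · exact (hv v).symm
    · exact (hv u').symm
    · exact (hS.sib_symm_eq _ _ ▸ hv u).symm
    · rw [graftFHs_sib_inr_inr, resFHs_sib_of_upward hP hS]
      simp [cFH]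

theorem bijective_sumElim_pair {v p : V} (hpv : p ≠ v) :
    (Sum.elim (fun a => a.1.1) ![p, v] :
      {a : {u // u ≠ v} // a ≠ ⟨p, hpv⟩} ⊕ Fin 2 → V).Bijective := by
  refine ⟨Function.Injective.sumElim (Subtype.val_injective.comp Subtype.val_injective)
    ?_ ?_, fun u => ?_⟩
  · simp [Function.Injective, Fin.forall_fin_two, hpv, hpv.symm]
  · intro a b
    have h1 : a.1.1 ≠ p := fun h => a.2 (Subtype.ext h)
    revert b
    simp [Fin.forall_fin_two, h1, a.1.2]
  · by_cases huv : u = v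
    · exact ⟨.inr 1, by simp [huv]⟩
    by_cases hup : u = p
    · exact ⟨.inr 0, by simp [hup]⟩
    exact ⟨.inl ⟨⟨u, huv⟩, fun h => hup (congrArg Subtype.val h)⟩, rfl⟩

theorem isIsoFH_graftFHs_xFH (hS : IsForestFH S) {v p : V}
    (hvp : S.parent v = some p) (hpv : p ≠ v) (hleaf : ∀ u, S.parent u ≠ some v)
    (hsibv : ∀ u, S.sib v u = false) (hsibp : ∀ u, S.sib p u = false) :
    IsIsoFH (Sum.elim (fun a => a.1.1) ![p, v] :
        {a : {u // u ≠ v} // a ≠ ⟨p, hpv⟩} ⊕ Fin 2 → V)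
      (graftFHs (resFHs S (· ≠ v)) ⟨p, hpv⟩ xFH fun _ => 0) S := by
  have hP : ∀ u q, u ≠ v → S.parent u = some q → q ≠ v := fun u q _ hq h =>
    hleaf u (h ▸ hq)
  refine ⟨bijective_sumElim_pair hpv, ?_, ?_⟩
  · rw [Sum.forall, Fin.forall_fin_two]
    refine ⟨fun a => ?_, ?_, ?_⟩
    · rcases h : S.parent a.1.1 with _ | q
      · rw [graftFHs_parent_inl_of_none (resFHs_parent_eq_none_of_upward hP h)]
        exact h.symm
      · have hres : (resFHs S (· ≠ v)).parent a.1 = some ⟨q, hP _ _ a.1.2 h⟩ :=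
          resFHs_parent_eq_some_iff.mpr h
        by_cases hqp : q = p
        · subst hqp
          rw [graftFHs_parent_inl_of_eq hres]
          simp [h]
        · rw [graftFHs_parent_inl_of_ne hres fun h => hqp (congrArg Subtype.val h)]
          simp [h]
    · rcases h : S.parent p with _ | q
      · rw [graftFHs_parent_inr_of_none_none xFH_parent_zero
          (resFHs_parent_eq_none_of_upward hP (u := ⟨p, hpv⟩) h)]
        simp [h]
      · have hqp : (⟨q, hP _ _ hpv h⟩ : {u // u ≠ v}) ≠ ⟨p, hpv⟩ := fun hq =>
          hS.parent_ne_self p (by rwa [show q = p from congrArg Subtype.val hq] at h)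
        rw [graftFHs_parent_inr_of_none_some xFH_parent_zero
          (resFHs_parent_eq_some_iff.mpr h) hqp]
        simp [h]
    · rw [graftFHs_parent_inr_of_some xFH_parent_one]
      simp [hvp]
  · have hsib : ∀ u, S.sib u v = false ∧ S.sib u p = false := fun u =>
      ⟨hS.sib_symm_eq u v ▸ hsibv u, hS.sib_symm_eq u p ▸ hsibp u⟩
    simp only [Sum.forall, Fin.forall_fin_two]
    refine ⟨fun a => ⟨fun a' => resFHs_sib_of_upward hP hS _ _, ?_⟩, ?_⟩
    · simp [hsib]
    · simp [hsibv, hsibp, xFH]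

end Isomorphisms

section SibBranch

variable {V : Type}

/-- The children of `a`'s parent lying in the same hyperedge as `a`, including `a`. -/
def sibClass (S : FHs V) (a : V) (u : V) : Prop := u = a ∨ S.sib u a

def sibBranch (S : FHs V) (a : V) (u : V) : Prop :=
  ∃ c, sibClass S a c ∧ Relation.ReflTransGen (fun x y => S.parent x = some y) u c

variable {S : FHs V} {a p : V}

theorem sibClass.parent_eq (hS : IsForestFH S) (hap : S.parent a = some p) {u : V}
    (hu : sibClass S a u) :
    S.parent u = some p := by
  rcases hu with rfl | hu
  · exact hap
  · exact (hS.2.2.2.1 u a hu).1.trans hap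

theorem sibClass.sib (hS : IsForestFH S) {u u' : V} (hu : sibClass S a u)
    (hu' : sibClass S a u') (hne : u ≠ u') :
    S.sib u u' := by
  obtain ⟨-, hsymm, -, -, htr⟩ := hS
  rcases hu with rfl | hu <;> rcases hu' with rfl | hu'
  · exact absurd rfl hne
  · exact hsymm _ _ hu'
  · exact hu
  · exact (htr _ _ _ hu (hsymm _ _ hu')).resolve_left hne

theorem sibBranch_of_parent {u q : V} (hq : S.parent u = some q) (hD : sibBranch S a q) :
    sibBranch S a u :=
  let ⟨c, hc, hqc⟩ := hD
  ⟨c, hc, .head hq hqc⟩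

theorem not_sibBranch_parent (hS : IsForestFH S) (hap : S.parent a = some p) :
    ¬ sibBranch S a p := by
  rintro ⟨c, hc, hpc⟩
  exact hS.not_ancFH_self c (.head' (sibClass.parent_eq hS hap hc) hpc)

theorem sibBranch.parent_of_not_sibClass {u : V} (hu : sibBranch S a u)
    (hnc : ¬ sibClass S a u) : ∃ q, S.parent u = some q ∧ sibBranch S a q := by
  obtain ⟨c, hc, huc⟩ := hu
  rcases huc.cases_head with rfl | ⟨q, hq, hqc⟩
  · exact absurd hc hnc
  · exact ⟨q, hq, c, hc, hqc⟩

theorem sibBranch_of_sib (hS : IsForestFH S) {u u' : V} (hs : S.sib u u')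
    (hu' : sibBranch S a u') :
    sibBranch S a u := by
  by_cases hc : sibClass S a u'
  · refine ⟨u, ?_, .refl⟩
    rcases hc with rfl | hc
    · exact .inr hs
    · exact hS.2.2.2.2 _ _ _ hs hc
  · obtain ⟨q, hq, hDq⟩ := hu'.parent_of_not_sibClass hc
    exact sibBranch_of_parent ((hS.2.2.2.1 _ _ hs).1.trans hq) hDq

end SibBranch

section SibCase

variable {V : Type}

/-- Once `D` is grafted back, its top vertices become pairwise siblings again; this recovers
the sibling relation of `S` on `D`. -/
theorem resFHs_sib_or_tops_eq_sib [DecidableEq V] {S : FHs V} (hS : IsForestFH S) {a : V}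
    {D : V → Prop} [DecidablePred D]
    (htop : ∀ u, D u → ¬ sibClass S a u → ∃ q, S.parent u = some q ∧ D q)
    (d d' : {u // D u}) :
    ((resFHs S D).sib d d' || (decide ((resFHs S D).parent d = none) &&
      decide ((resFHs S D).parent d' = none) && decide (d ≠ d'))) = S.sib d.1 d'.1 := by
  have hroot : ∀ d : {u // D u}, (resFHs S D).parent d = none → sibClass S a d.1 := by
    intro d hd
    by_contra hc
    obtain ⟨q, hq, hDq⟩ := htop _ d.2 hc
    exact resFHs_parent_eq_none_iff.mp hd q hq hDq
  cases hs : S.sib d.1 d'.1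
  · have hT : (resFHs S D).sib d d' = false :=
      Bool.eq_false_iff.mpr fun h => by simp [(resFHs_sib_eq_true_iff.mp h).1] at hs
    simp only [hT, Bool.false_or, Bool.and_eq_false_iff, decide_eq_false_iff_not]
    by_contra! h
    have := sibClass.sib hS (hroot d h.1.1) (hroot d' h.1.2) fun h' => h.2 (Subtype.ext h')
    simp [hs] at this
  · obtain ⟨hpp, hne⟩ := hS.2.2.2.1 _ _ hs
    obtain ⟨q, hq⟩ := Option.ne_none_iff_exists'.mp hne
    by_cases hDq : D q
    · rw [resFHs_sib_eq_true_iff.mpr ⟨hs, q, hq, hDq⟩, Bool.true_or]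
    · have hT : ∀ d : {u // D u}, S.parent d.1 = some q → (resFHs S D).parent d = none :=
        fun d hd => resFHs_parent_eq_none_iff.mpr fun q' hq' =>
          Option.some_inj.mp (hq'.symm.trans hd) ▸ hDq
      have hdd : d ≠ d' := fun h => hS.2.2.1 d.1 (h ▸ hs)
      simp [hT d hq, hT d' (hpp ▸ hq), hdd]

theorem isIsoFH_graftFHs_of_sibClass [DecidableEq V] {S : FHs V} (hS : IsForestFH S) {a p : V}
    (hap : S.parent a = some p) {D : V → Prop} [DecidablePred D] (hDa : D a) (hDp : ¬ D p)
    (hdown : ∀ u q, S.parent u = some q → D q → D u)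
    (hsib : ∀ u u', S.sib u u' → D u' → D u)
    (htop : ∀ u, D u → ¬ sibClass S a u → ∃ q, S.parent u = some q ∧ D q)
    (f : {x // (resFHs S fun u => u = a ∨ ¬ D u).parent x = some ⟨a, .inl rfl⟩} →
      {u // D u}) :
    IsIsoFH (Sum.elim (fun x => x.1.1) Subtype.val :
        {x : {u // u = a ∨ ¬ D u} // x ≠ ⟨a, .inl rfl⟩} ⊕ {u // D u} → V)
      (graftFHs (resFHs S fun u => u = a ∨ ¬ D u) ⟨a, .inl rfl⟩ (resFHs S D) f) S := by
  have hP : ∀ u q, (u = a ∨ ¬ D u) → S.parent u = some q → q = a ∨ ¬ D q := by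
    rintro u q (rfl | hu) hq
    · exact .inr (Option.some_inj.mp (hq.symm.trans hap) ▸ hDp)
    · exact .inr fun hq' => hu (hdown _ _ hq hq')
  have hnotD : ∀ x : {x : {u // u = a ∨ ¬ D u} // x ≠ ⟨a, .inl rfl⟩}, ¬ D x.1.1 :=
    fun x => x.1.2.resolve_left fun h => x.2 (Subtype.ext h)
  have hwp :
      (resFHs S fun u => u = a ∨ ¬ D u).parent ⟨a, .inl rfl⟩ = some ⟨p, .inr hDp⟩ :=
    resFHs_parent_eq_some_iff.mpr hap
  have hpw : (⟨p, .inr hDp⟩ : {u // u = a ∨ ¬ D u}) ≠ ⟨a, .inl rfl⟩ := fun h =>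
    hDp (Subtype.mk.inj h ▸ hDa)
  refine ⟨⟨Function.Injective.sumElim (Subtype.val_injective.comp Subtype.val_injective)
    Subtype.val_injective fun x d h => hnotD x (h ▸ d.2), fun u => ?_⟩, ?_, ?_⟩
  · by_cases hu : D u
    · exact ⟨.inr ⟨u, hu⟩, rfl⟩
    · exact ⟨.inl ⟨⟨u, .inr hu⟩, fun h => hu (Subtype.mk.inj h ▸ hDa)⟩, rfl⟩
  · rintro (x | d)
    · rcases h : S.parent x.1.1 with _ | q
      · rw [graftFHs_parent_inl_of_none (resFHs_parent_eq_none_of_upward hP h)]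
        simp [h]
      · have hqw : (⟨q, hP _ _ x.1.2 h⟩ : {u // u = a ∨ ¬ D u}) ≠ ⟨a, .inl rfl⟩ :=
          fun hq => hnotD x (hdown _ _ h (by rwa [Subtype.mk.inj hq]))
        rw [graftFHs_parent_inl_of_ne (resFHs_parent_eq_some_iff.mpr h) hqw]
        simp [h]
    · by_cases hc : sibClass S a d.1
      · have hd := sibClass.parent_eq hS hap hc
        have hTd : (resFHs S D).parent d = none := resFHs_parent_eq_none_iff.mpr fun q hq =>
          Option.some_inj.mp (hq.symm.trans hd) ▸ hDp
        rw [graftFHs_parent_inr_of_none_some hTd hwp hpw]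
        simp [hd]
      · obtain ⟨q, hq, hDq⟩ := htop _ d.2 hc
        rw [graftFHs_parent_inr_of_some (q := ⟨q, hDq⟩) (resFHs_parent_eq_some_iff.mpr hq)]
        simp [hq]
  · have hcross :
        ∀ (x : {x : {u // u = a ∨ ¬ D u} // x ≠ ⟨a, .inl rfl⟩}) (d : {u // D u}),
        S.sib x.1.1 d.1 = false := fun x d =>
      Bool.eq_false_iff.mpr fun h => hnotD x (hsib _ _ h d.2)
    rintro (x | d) (x' | d')
    · exact resFHs_sib_of_upward hP hS _ _
    · exact (hcross x d').symm
    · exact (hS.sib_symm_eq _ _ ▸ hcross x' d).symm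
    · rw [graftFHs_sib_inr_inr, hwp]
      simpa using resFHs_sib_or_tops_eq_sib hS htop d d'

end SibCase

namespace GenFH

variable {V : Type} [Fintype V] [DecidableEq V] {S : FHs V}

theorem of_card_eq_one (hS : IsForestFH S) (hV : Fintype.card V = 1) :
    GenFH V (Finsupp.single S 1) := by
  have : Subsingleton V := Fintype.card_le_one_iff_subsingleton.mp hV.le
  refine unit.of_isIsoFH
    ⟨(Fintype.equivFinOfCardEq hV).symm.bijective, fun x => ?_, fun x y => ?_⟩
  · rcases h : S.parent _ with _ | q
    · rfl
    · exact absurd (Subsingleton.elim q _ ▸ h) (hS.parent_ne_self _)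
  · rw [Subsingleton.elim x y]
    exact (Bool.eq_false_iff.mpr (hS.2.2.1 _)).symm

theorem of_isolated (hS : IsForestFH S) {v : V} (hroot : S.parent v = none)
    (hleaf : ∀ u, S.parent u ≠ some v)
    (hgen : GenFH {u // u ≠ v} (Finsupp.single (resFHs S (· ≠ v)) 1)) :
    GenFH V (Finsupp.single S 1) := by
  have hleaf₁ : ∀ a : Fin 2, cFH.parent a ≠ some 1 := by decide
  have hins := c2.insFHs 1 hgen
  rw [insFHs_of_leaf _ hleaf₁ fun a => absurd a.2 (hleaf₁ a.1)] at hins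
  exact hins.of_isIsoFH (isIsoFH_graftFHs_cFH hS hroot hleaf _)

theorem of_leaf (hS : IsForestFH S) {v p : V} (hvp : S.parent v = some p)
    (hleaf : ∀ u, S.parent u ≠ some v) (hsibv : ∀ u, S.sib v u = false)
    (hsibp : ∀ u, S.sib p u = false)
    (hgen : GenFH {u // u ≠ v} (Finsupp.single (resFHs S (· ≠ v)) 1))
    (hrec : ∀ (A : Type) [Fintype A] [DecidableEq A] (G : FHs A), IsForestFH G →
      Fintype.card A = Fintype.card V → PhiFH S < PhiFH G → GenFH A (Finsupp.single G 1)) :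
    GenFH V (Finsupp.single S 1) := by
  have hpv : p ≠ v := fun h => hleaf v (h ▸ hvp)
  have hiso := isIsoFH_graftFHs_xFH hS hvp hpv hleaf hsibv hsibp
  refine (single_of_sum _ ⟨fun _ => 0, fun _ _ _ => rfl⟩
    (hgen.insFHs ⟨p, hpv⟩ x2) fun g hg => ?_).of_isIsoFH hiso
  obtain ⟨a₀, ha₀⟩ : ∃ a, g.1 a = 1 := by
    by_contra! h
    exact hg (Subtype.ext (funext fun a => by have := h a; lia))
  refine hrec _ _ (isForestFH_graftFHs (isForestFH_resFHs hS _) isForestFH_xFH g.2) ?_ ?_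
  · rw [← Fintype.card_congr (Equiv.ofBijective _ hiso.1)]
  · exact hiso.phiFH_eq ▸ phiFH_graftFHs_xFH_lt (isForestFH_resFHs hS _) g.1 ha₀

theorem of_sib (hS : IsForestFH S) {a b : V} (hab : S.sib a b)
    (hrec : ∀ (A : Type) [Fintype A] [DecidableEq A] [Nonempty A] (G : FHs A), IsForestFH G →
      Fintype.card A < Fintype.card V → GenFH A (Finsupp.single G 1)) :
    GenFH V (Finsupp.single S 1) := by
  classical
  obtain ⟨p, hap⟩ := Option.ne_none_iff_exists'.mp (hS.2.2.2.1 a b hab).2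
  have hDa : sibBranch S a a := ⟨a, .inl rfl, .refl⟩
  have hDb : sibBranch S a b := ⟨b, .inr (hS.2.1 _ _ hab), .refl⟩
  have hDp := not_sibBranch_parent hS hap
  have hba : b ≠ a := fun h => hS.2.2.1 a (h ▸ hab)
  have hleaf : ∀ x, (resFHs S fun u => u = a ∨ ¬ sibBranch S a u).parent x ≠
      some ⟨a, .inl rfl⟩ := by
    rintro ⟨x, rfl | hx⟩ h <;> have h := resFHs_parent_eq_some_iff.mp h
    · exact hS.parent_ne_self _ h
    · exact hx (sibBranch_of_parent h hDa)
  have : Nonempty {u // u = a ∨ ¬ sibBranch S a u} := ⟨⟨a, .inl rfl⟩⟩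
  have : Nonempty {u // sibBranch S a u} := ⟨⟨a, hDa⟩⟩
  have hrest := hrec _ _ (isForestFH_resFHs hS fun u => u = a ∨ ¬ sibBranch S a u)
    (Fintype.card_subtype_lt (x := b) (by tauto))
  have hbranch := hrec _ _ (isForestFH_resFHs hS (sibBranch S a)) (Fintype.card_subtype_lt hDp)
  have hins := hrest.insFHs ⟨a, .inl rfl⟩ hbranch
  rw [insFHs_of_leaf _ hleaf fun x => absurd x.2 (hleaf x.1)] at hins
  exact hins.of_isIsoFH (isIsoFH_graftFHs_of_sibClass hS hap hDa hDp
    (fun _ _ => sibBranch_of_parent) (fun _ _ h => sibBranch_of_sib hS h)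
    (fun _ hu hc => hu.parent_of_not_sibClass hc) _)

theorem of_forall_lt [Nonempty V] (hS : IsForestFH S)
    (hcard : ∀ (A : Type) [Fintype A] [DecidableEq A] [Nonempty A] (G : FHs A), IsForestFH G →
      Fintype.card A < Fintype.card V → GenFH A (Finsupp.single G 1))
    (hphi : ∀ (A : Type) [Fintype A] [DecidableEq A] (G : FHs A), IsForestFH G →
      Fintype.card A = Fintype.card V → PhiFH S < PhiFH G → GenFH A (Finsupp.single G 1)) :
    GenFH V (Finsupp.single S 1) := by
  by_cases hV : Fintype.card V = 1
  · exact of_card_eq_one hS hV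
  by_cases hsib : ∃ a b, S.sib a b
  · obtain ⟨a, b, hab⟩ := hsib
    exact of_sib hS hab hcard
  simp only [not_exists, Bool.not_eq_true] at hsib
  obtain ⟨v, hleaf⟩ := hS.exists_leaf
  obtain ⟨u, hu⟩ := Fintype.exists_ne_of_one_lt_card
    (by have := Fintype.card_pos (α := V); omega) v
  have : Nonempty {u // u ≠ v} := ⟨⟨u, hu⟩⟩
  have hgen := hcard _ _ (isForestFH_resFHs hS (· ≠ v))
    (Fintype.card_subtype_lt (x := v) (by simp))
  rcases hvp : S.parent v with _ | p
  · exact of_isolated hS hvp hleaf hgen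
  · exact of_leaf hS hvp hleaf (hsib v) (hsib p) hgen hphi

end GenFH

/-- The operad `FH` of forests of rooted hypertrees is generated by its arity-2 component,
i.e. by `x₂` and `c₂`: every forest of rooted hypertrees lies in the suboperad they
generate. -/
theorem fh_generated_in_arity_two :
    ∀ (V : Type) [Fintype V] [DecidableEq V] [Nonempty V] (S : FHs V),
      IsForestFH S → GenFH V (Finsupp.single S 1) := by
  suffices h : ∀ n k (V : Type) [Fintype V] [DecidableEq V] [Nonempty V] (S : FHs V),
      IsForestFH S → Fintype.card V = n → n * n - PhiFH S = k →
        GenFH V (Finsupp.single S 1) from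
    fun V _ _ _ S hS => h _ _ V S hS rfl rfl
  intro n
  induction n using Nat.strong_induction_on with | _ n ihn => ?_
  intro k
  induction k using Nat.strong_induction_on with | _ k ihk => ?_
  intro V _ _ _ S hS hn hk
  refine GenFH.of_forall_lt hS (fun A _ _ _ G hG hA => ihn _ (hn ▸ hA) _ A G hG rfl rfl)
    fun A _ _ G hG hA hlt => ?_
  have : Nonempty A := Fintype.card_pos_iff.mp (hA ▸ Fintype.card_pos)
  have := hG.phiFH_lt
  exact ihk _ (by rw [hA, hn] at this; omega) A G hG (hA.trans hn) rfl
end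
end
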